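/- Let f : (a,b) → ℝ be locally integrable satisfying osc(f,I) = (1/4)|Df|(I) for all open intervals I ⊂⊂ (a,b). If f(y) = m_{x,y} for some a < x < y < b, where m_{x,y} is the mean of f over (x,y), then f is constant on (x,y). -/

import Mathlib

open MeasureTheory Set Filter
open scoped ENNReal

/-- Mean oscillation of `f` over the interval `(x, y)`. -/
noncomputable def oscI (f : ℝ → ℝ) (x y : ℝ) : ℝ :=
  (y - x)⁻¹ * ∫ t in x..y, |f t - (y - x)⁻¹ * ∫ s in x..y, f s|

/-- Total variation of the distributional derivative of `f` on `(x, y)`: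
the supremum of `∫ f φ'` over smooth `φ` supported in `(x, y)` with `‖φ‖_∞ ≤ 1`. -/
noncomputable def varD (f : ℝ → ℝ) (x y : ℝ) : ℝ≥0∞ :=
  ⨆ φ : {φ : ℝ → ℝ // ContDiff ℝ (⊤ : ℕ∞) φ ∧ HasCompactSupport φ ∧
      tsupport φ ⊆ Set.Ioo x y ∧ ∀ t, |φ t| ≤ 1},
    ENNReal.ofReal (∫ t in x..y, f t * deriv (φ : ℝ → ℝ) t)

lemma oscI_nonneg (f : ℝ → ℝ) {x y : ℝ} (hxy : x ≤ y) : 0 ≤ oscI f x y := by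
  unfold oscI
  refine mul_nonneg (inv_nonneg.mpr (by linarith)) ?_
  exact intervalIntegral.integral_nonneg hxy (fun u _ => abs_nonneg _)

/-- `varD` is monotone in the right endpoint. -/
lemma varD_mono_right {a b : ℝ} (f : ℝ → ℝ) (hf : ContinuousOn f (Set.Ioo a b))
    {x y y' : ℝ} (hax : a < x) (hxy : x < y) (hyy' : y ≤ y') (hy'b : y' < b) :
    varD f x y ≤ varD f x y' := by
  unfold varD
  refine iSup_le ?_
  rintro ⟨φ, hsm, hcs, hsupp, hbd⟩
  have hderiv : Continuous (deriv φ) := hsm.continuous_deriv (by simp)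
  have hsub1 : Set.uIcc x y ⊆ Set.Ioo a b := by
    rw [Set.uIcc_of_le hxy.le]
    exact Set.Icc_subset_Ioo hax (lt_of_le_of_lt hyy' hy'b)
  have hsub2 : Set.uIcc y y' ⊆ Set.Ioo a b := by
    rw [Set.uIcc_of_le hyy']
    exact Set.Icc_subset_Ioo (hax.trans hxy) hy'b
  have hi1 : IntervalIntegrable (fun t => f t * deriv φ t) volume x y :=
    ((hf.mono hsub1).mul (hderiv.continuousOn)).intervalIntegrable
  have hi2 : IntervalIntegrable (fun t => f t * deriv φ t) volume y y' :=
    ((hf.mono hsub2).mul (hderiv.continuousOn)).intervalIntegrable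
  have hzero : (∫ t in y..y', f t * deriv φ t) = 0 := by
    have heq : Set.EqOn (fun t => f t * deriv φ t) (fun _ => (0:ℝ)) (Set.uIcc y y') := by
      intro t ht
      rw [Set.uIcc_of_le hyy'] at ht
      have hnot : t ∉ tsupport φ := by
        intro hmem
        exact absurd (hsupp hmem).2 (not_lt.mpr ht.1)
      have hd0 : deriv φ t = 0 := by
        by_contra hne
        exact hnot (support_deriv_subset (Function.mem_support.mpr hne))
      simp [hd0]
    rw [intervalIntegral.integral_congr heq]
    simp
  have hint : (∫ t in x..y', f t * deriv φ t) = ∫ t in x..y, f t * deriv φ t := by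
    rw [← intervalIntegral.integral_add_adjacent_intervals hi1 hi2, hzero, add_zero]
  calc ENNReal.ofReal (∫ t in x..y, f t * deriv φ t)
      = ENNReal.ofReal (∫ t in x..y', f t * deriv φ t) := by rw [hint]
    _ ≤ _ := le_iSup (fun ψ : {ψ : ℝ → ℝ // ContDiff ℝ (⊤ : ℕ∞) ψ ∧ HasCompactSupport ψ ∧
          tsupport ψ ⊆ Set.Ioo x y' ∧ ∀ t, |ψ t| ≤ 1} =>
          ENNReal.ofReal (∫ t in x..y', f t * deriv (ψ : ℝ → ℝ) t))
        ⟨φ, hsm, hcs, hsupp.trans (Set.Ioo_subset_Ioo le_rfl hyy'), hbd⟩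

/-- If a continuous locally integrable `f` satisfies `osc(f,I) = (1/4)|Df|(I)` for all
intervals `I ⊂⊂ (a,b)` and `f(y)` equals the mean of `f` over `(x, y)`, then `f` is
constant on `(x, y)`. -/
theorem constant_of_endpoint_eq_mean (a b : ℝ) (hab : a < b) (f : ℝ → ℝ)
    (hf : LocallyIntegrableOn f (Set.Ioo a b))
    (hcont : ContinuousOn f (Set.Ioo a b))
    (hid : ∀ x y, a < x → x < y → y < b →
      varD f x y = 4 * ENNReal.ofReal (oscI f x y)) :
    ∀ x y, a < x → x < y → y < b →
      f y = (y - x)⁻¹ * ∫ s in x..y, f s →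
      ∀ t ∈ Set.Ioo x y, f t = f y := by
  intro x y hax hxy hyb hmean t ht
  set m : ℝ := f y with hm
  have hLpos : (0:ℝ) < y - x := sub_pos.mpr hxy
  have hcontIcc : ∀ p q : ℝ, a < p → p ≤ q → q < b →
      ContinuousOn f (Set.uIcc p q) := by
    intro p q hp hpq hq
    refine hcont.mono ?_
    rw [Set.uIcc_of_le hpq]
    exact Set.Icc_subset_Ioo hp hq
  have hfi : ∀ p q : ℝ, a < p → p ≤ q → q < b → IntervalIntegrable f volume p q :=
    fun p q hp hpq hq => (hcontIcc p q hp hpq hq).intervalIntegrable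
  have habsI : ∀ (c p q : ℝ), a < p → p ≤ q → q < b →
      IntervalIntegrable (fun s => |f s - c|) volume p q := by
    intro c p q hp hpq hq
    exact (((hcontIcc p q hp hpq hq).sub continuousOn_const).abs).intervalIntegrable
  have hsubI : ∀ (c p q : ℝ), a < p → p ≤ q → q < b →
      IntervalIntegrable (fun s => f s - c) volume p q := by
    intro c p q hp hpq hq
    exact ((hcontIcc p q hp hpq hq).sub continuousOn_const).intervalIntegrable
  -- the integral of f over x..y
  have hmean' : (∫ s in x..y, f s) = (y - x) * m := by
    rw [hmean]
    field_simp
  have hmzero : (∫ s in x..y, (f s - m)) = 0 := by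
    rw [intervalIntegral.integral_sub (hfi x y hax hxy.le hyb) intervalIntegrable_const,
      intervalIntegral.integral_const, hmean', smul_eq_mul, sub_self]
  have hosc_eq : oscI f x y = (y - x)⁻¹ * ∫ s in x..y, |f s - m| := by
    rw [oscI, ← hmean]
  -- Main claim: the oscillation over (x,y) vanishes.
  have hosc0 : (∫ s in x..y, |f s - m|) = 0 := by
    have hnn : (0:ℝ) ≤ ∫ s in x..y, |f s - m| :=
      intervalIntegral.integral_nonneg hxy.le (fun u _ => abs_nonneg _)
    by_contra hne
    have hIpos : 0 < ∫ s in x..y, |f s - m| := lt_of_le_of_ne hnn (Ne.symm hne)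
    have hopos : 0 < oscI f x y := by
      rw [hosc_eq]; positivity
    set ε : ℝ := oscI f x y / 4 with hε
    have hεpos : 0 < ε := by positivity
    have hyI : y ∈ Set.Ioo a b := ⟨hax.trans hxy, hyb⟩
    have hcy : ContinuousAt f y := hcont.continuousAt (isOpen_Ioo.mem_nhds hyI)
    obtain ⟨δ, hδpos, hδ⟩ := Metric.continuousAt_iff.mp hcy ε hεpos
    set h : ℝ := min (δ / 2) ((b - y) / 2) with hh
    have hhpos : 0 < h := lt_min (by linarith) (by linarith)
    set y' : ℝ := y + h with hy'def
    have hyy' : y ≤ y' := by rw [hy'def]; linarith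
    have hxy' : x < y' := by rw [hy'def]; linarith
    have hy'b : y' < b := by
      have h2 : h ≤ (b - y) / 2 := min_le_right _ _
      rw [hy'def]; linarith
    have hL'pos : (0:ℝ) < y' - x := by linarith
    -- mean over the larger interval
    set m' : ℝ := (y' - x)⁻¹ * ∫ s in x..y', f s with hm'
    -- small oscillation of f on [y, y']
    have hsmallIcc : ∀ s ∈ Set.Icc y y', |f s - m| ≤ ε := by
      intro s hs
      have hdist : dist s y < δ := by
        rw [Real.dist_eq, abs_of_nonneg (by linarith [hs.1] : (0:ℝ) ≤ s - y)]
        have h1 : h ≤ δ / 2 := min_le_left _ _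
        have h2 : s ≤ y + h := by rw [← hy'def]; exact hs.2
        linarith
      have := hδ hdist
      rw [Real.dist_eq] at this
      exact this.le
    -- bound on the tail integral
    have htail : (∫ s in y..y', |f s - m|) ≤ ε * h := by
      have := intervalIntegral.integral_mono_on hyy'
        (habsI m y y' (hax.trans hxy) hyy' hy'b)
        (intervalIntegrable_const (c := ε))
        (fun s hs => hsmallIcc s hs)
      calc (∫ s in y..y', |f s - m|) ≤ ∫ _ in y..y', ε := this
        _ = (y' - y) * ε := by rw [intervalIntegral.integral_const, smul_eq_mul]
        _ = ε * h := by rw [hy'def]; ring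
    -- bound on |m' - m|
    have hm'm : |m' - m| ≤ (y' - x)⁻¹ * (ε * h) := by
      have hsplit : (∫ s in x..y', (f s - m)) = ∫ s in y..y', (f s - m) := by
        rw [← intervalIntegral.integral_add_adjacent_intervals
            (hsubI m x y hax hxy.le hyb) (hsubI m y y' (hax.trans hxy) hyy' hy'b),
          hmzero, zero_add]
      have hm'eq : m' - m = (y' - x)⁻¹ * ∫ s in x..y', (f s - m) := by
        rw [intervalIntegral.integral_sub (hfi x y' hax hxy'.le hy'b) intervalIntegrable_const,
          intervalIntegral.integral_const, smul_eq_mul, hm']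
        field_simp
      have hbnd : |∫ s in y..y', (f s - m)| ≤ ε * h := by
        have hnorm : ∀ s ∈ Set.uIoc y y', ‖f s - m‖ ≤ ε := by
          intro s hs
          rw [Set.uIoc_of_le hyy'] at hs
          exact hsmallIcc s ⟨hs.1.le, hs.2⟩
        have := intervalIntegral.norm_integral_le_of_norm_le_const hnorm
        rw [Real.norm_eq_abs] at this
        calc |∫ s in y..y', (f s - m)| ≤ ε * |y' - y| := this
          _ = ε * h := by rw [abs_of_nonneg (by linarith), hy'def]; ring
      rw [hm'eq, hsplit, abs_mul, abs_of_nonneg (inv_nonneg.mpr hL'pos.le)]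
      exact mul_le_mul_of_nonneg_left hbnd (inv_nonneg.mpr hL'pos.le)
    -- bound on the larger oscillation
    have hosc'_eq : oscI f x y' = (y' - x)⁻¹ * ∫ s in x..y', |f s - m'| := by
      rw [oscI, hm']
    have hI'bnd : (∫ s in x..y', |f s - m'|) ≤ (∫ s in x..y, |f s - m|) + 2 * (ε * h) := by
      have hstep1 : (∫ s in x..y', |f s - m'|) ≤ ∫ s in x..y', (|f s - m| + |m - m'|) := by
        refine intervalIntegral.integral_mono_on hxy'.le
          (habsI m' x y' hax hxy'.le hy'b)
          ((habsI m x y' hax hxy'.le hy'b).add (intervalIntegrable_const (c := |m - m'|)))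
          (fun s _ => abs_sub_le (f s) m m')
      have hstep2 : (∫ s in x..y', (|f s - m| + |m - m'|))
          = (∫ s in x..y', |f s - m|) + (y' - x) * |m - m'| := by
        rw [intervalIntegral.integral_add (habsI m x y' hax hxy'.le hy'b)
          (intervalIntegrable_const (c := |m - m'|)),
          intervalIntegral.integral_const, smul_eq_mul]
      have hstep3 : (∫ s in x..y', |f s - m|)
          = (∫ s in x..y, |f s - m|) + ∫ s in y..y', |f s - m| := by
        rw [← intervalIntegral.integral_add_adjacent_intervals
          (habsI m x y hax hxy.le hyb) (habsI m y y' (hax.trans hxy) hyy' hy'b)]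
      have hstep4 : (y' - x) * |m - m'| ≤ ε * h := by
        rw [abs_sub_comm]
        calc (y' - x) * |m' - m| ≤ (y' - x) * ((y' - x)⁻¹ * (ε * h)) :=
              mul_le_mul_of_nonneg_left hm'm hL'pos.le
          _ = ε * h := by field_simp
      calc (∫ s in x..y', |f s - m'|)
          ≤ (∫ s in x..y', |f s - m|) + (y' - x) * |m - m'| := by
            rw [← hstep2]; exact hstep1
        _ ≤ ((∫ s in x..y, |f s - m|) + ε * h) + ε * h := by
            rw [hstep3]; exact add_le_add (add_le_add_right htail _) hstep4
        _ = (∫ s in x..y, |f s - m|) + 2 * (ε * h) := by ring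
    -- monotonicity of varD transfers to oscI through the identity
    have hvmono := varD_mono_right f hcont hax hxy hyy' hy'b
    rw [hid x y hax hxy hyb, hid x y' hax hxy' hy'b] at hvmono
    have h4ne : (4 : ℝ≥0∞) ≠ 0 := by norm_num
    have h4top : (4 : ℝ≥0∞) ≠ ⊤ := by norm_num
    have hofle := (ENNReal.mul_le_mul_iff_right h4ne h4top).mp hvmono
    have hoscle : oscI f x y ≤ oscI f x y' :=
      (ENNReal.ofReal_le_ofReal_iff (oscI_nonneg f hxy'.le)).mp hofle
    -- combine everything
    have hy'x : y' - x = (y - x) + h := by rw [hy'def]; ring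
    have hkey : oscI f x y * (y' - x) ≤ (y - x) * oscI f x y + 2 * (ε * h) := by
      have h2 : oscI f x y' * (y' - x) = ∫ s in x..y', |f s - m'| := by
        rw [hosc'_eq]; field_simp
      have h3 : (y - x) * oscI f x y = ∫ s in x..y, |f s - m| := by
        rw [hosc_eq]; field_simp
      calc oscI f x y * (y' - x) ≤ oscI f x y' * (y' - x) :=
            mul_le_mul_of_nonneg_right hoscle hL'pos.le
        _ = ∫ s in x..y', |f s - m'| := h2
        _ ≤ (∫ s in x..y, |f s - m|) + 2 * (ε * h) := hI'bnd
        _ = (y - x) * oscI f x y + 2 * (ε * h) := by rw [h3]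
    have hexpand : oscI f x y * (y' - x) = (y - x) * oscI f x y + oscI f x y * h := by
      rw [hy'x]; ring
    have hmulh : oscI f x y * h ≤ (2 * ε) * h := by
      rw [hexpand] at hkey; linarith
    have hle2e : oscI f x y ≤ 2 * ε := le_of_mul_le_mul_right hmulh hhpos
    rw [hε] at hle2e
    linarith
  -- conclude that f is constant on (x, y)
  by_contra hne
  have hgt : 0 < |f t - m| := abs_pos.mpr (sub_ne_zero.mpr hne)
  have htI : t ∈ Set.Ioo a b := ⟨hax.trans ht.1, ht.2.trans hyb⟩
  have hct : ContinuousAt (fun s => |f s - m|) t :=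
    ((hcont.continuousAt (isOpen_Ioo.mem_nhds htI)).sub continuousAt_const).abs
  obtain ⟨δ, hδpos, hδ⟩ := Metric.continuousAt_iff.mp hct _ hgt
  set r : ℝ := min (δ / 2) (min ((t - x) / 2) ((y - t) / 2)) with hr
  have hrd : r ≤ δ / 2 := min_le_left _ _
  have hrt : r ≤ (t - x) / 2 := le_trans (min_le_right _ _) (min_le_left _ _)
  have hry : r ≤ (y - t) / 2 := le_trans (min_le_right _ _) (min_le_right _ _)
  have hrpos : 0 < r :=
    lt_min (by linarith) (lt_min (by linarith [ht.1]) (by linarith [ht.2]))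
  set p : ℝ := t - r with hp
  set q : ℝ := t + r with hq
  have hxp : x < p := by rw [hp]; linarith [ht.1]
  have hqy : q < y := by rw [hq]; linarith [ht.2]
  have hpq : p < q := by rw [hp, hq]; linarith
  have hap : a < p := hax.trans hxp
  have hqb : q < b := hqy.trans hyb
  have hpos : ∀ s ∈ Set.Ioo p q, 0 < |f s - m| := by
    intro s hs
    have hdist : dist s t < δ := by
      rw [Real.dist_eq, abs_sub_lt_iff]
      constructor
      · have := hs.2; rw [hq] at this; linarith
      · have := hs.1; rw [hp] at this; linarith
    have hcl := hδ hdist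
    rw [Real.dist_eq] at hcl
    have := abs_sub_lt_iff.mp hcl
    linarith [this.2, abs_nonneg (f s - m)]
  have hmid : 0 < ∫ s in p..q, |f s - m| :=
    intervalIntegral.intervalIntegral_pos_of_pos_on
      (habsI m p q hap hpq.le hqb) hpos hpq
  have hnn1 : (0:ℝ) ≤ ∫ s in x..p, |f s - m| :=
    intervalIntegral.integral_nonneg hxp.le (fun u _ => abs_nonneg _)
  have hnn2 : (0:ℝ) ≤ ∫ s in q..y, |f s - m| :=
    intervalIntegral.integral_nonneg hqy.le (fun u _ => abs_nonneg _)
  have e2 : (∫ s in p..q, |f s - m|) + (∫ s in q..y, |f s - m|)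
      = ∫ s in p..y, |f s - m| :=
    intervalIntegral.integral_add_adjacent_intervals
      (habsI m p q hap hpq.le hqb) (habsI m q y (hap.trans hpq) hqy.le hyb)
  have e1 : (∫ s in x..p, |f s - m|) + (∫ s in p..y, |f s - m|)
      = ∫ s in x..y, |f s - m| :=
    intervalIntegral.integral_add_adjacent_intervals
      (habsI m x p hax hxp.le (hpq.trans hqb))
      (habsI m p y hap (hpq.trans hqy).le hyb)
  rw [hosc0] at e1
  linarith
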